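/- Assume the weakly convex Lipschitz setting and let λ > 0 and X ∈ St(n,p). Then every minimizer Z of Y ↦ f(Y) + (1/(2λ))‖Y−X‖_{A_X^{-1}}² over St(n,p) satisfies ‖Z − X‖ ≤ 4λL/ℓ and (ℓ/(4λ))‖Z−X‖² ≤ (1/(2λ))‖Z−X‖_{A_X^{-1}}² ≤ f(X) − f(Z) ≤ L‖Z−X‖. -/

import Mathlib

/-!
Common definitions for the formalization of results from
"Nonsmooth Optimization over the Stiefel Manifold via a Randomized
Submanifold Subgradient Method" (RSSM).
-/

open Matrix Finset

noncomputable section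

namespace RSSM

variable {n p ℓ : ℕ}

/-- Real `n × p` matrices. -/
abbrev Mat (n p : ℕ) := Matrix (Fin n) (Fin p) ℝ

/-- Frobenius inner product `⟨ξ,η⟩ = tr(ξᵀ η)`. -/
def fip (ξ η : Mat n p) : ℝ := (ξᵀ * η).trace

/-- Frobenius norm. -/
def fnorm (ξ : Mat n p) : ℝ := Real.sqrt (fip ξ ξ)

/-- The Stiefel manifold `St(n,p)`. -/
def Stiefel (n p : ℕ) : Set (Mat n p) := {X | Xᵀ * X = 1}

/-- Column-selection matrix `I_C`. -/
def sel (C : Finset (Fin p)) : Matrix (Fin p) (Fin C.card) ℝ :=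
  Matrix.of fun s t => if s = C.orderEmbOfFin rfl t then (1 : ℝ) else 0

/-- Skew-symmetric part. -/
def skewPart {m : ℕ} (A : Matrix (Fin m) (Fin m) ℝ) : Matrix (Fin m) (Fin m) ℝ :=
  (1 / 2 : ℝ) • (A - Aᵀ)

/-- Symmetric part. -/
def symPart {m : ℕ} (A : Matrix (Fin m) (Fin m) ℝ) : Matrix (Fin m) (Fin m) ℝ :=
  (1 / 2 : ℝ) • (A + Aᵀ)

open Classical in
/-- Inverse of the positive-semidefinite square root (junk value `0` otherwise). -/
def invSqrt {m : ℕ} (S : Matrix (Fin m) (Fin m) ℝ) : Matrix (Fin m) (Fin m) ℝ :=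
  if h : S.PosSemidef then
    ((h.1.eigenvectorUnitary : Matrix (Fin m) (Fin m) ℝ) * diagonal (Real.sqrt ∘ h.1.eigenvalues)
      * (star h.1.eigenvectorUnitary : Matrix (Fin m) (Fin m) ℝ))⁻¹ else 0

/-- Orthogonal projection onto the tangent space `T_X St(n,p)`. -/
def ptan (X ξ : Mat n p) : Mat n p := ξ - X * symPart (Xᵀ * ξ)

/-- Orthogonal projection `Π` onto the tangent space of the submanifold block at `X_D`. -/
def pblk (X : Mat n p) (D : Finset (Fin p)) (η : Matrix (Fin n) (Fin D.card) ℝ) :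
    Matrix (Fin n) (Fin D.card) ℝ :=
  (X * sel D) * skewPart ((X * sel D)ᵀ * η) + (1 - X * Xᵀ) * η

/-- The averaging operator `A_X` (written as an average over ordered pairs of
distinct indices, which equals the average over unordered pairs since each
unordered pair is counted twice). -/
def avg (C : Fin ℓ → Finset (Fin p)) (X ξ : Mat n p) : Mat n p :=
  ((ℓ : ℝ) * ((ℓ : ℝ) - 1))⁻¹ •
    ∑ q ∈ Finset.univ.offDiag,
      ((1 : Matrix (Fin n) (Fin n) ℝ)
          - (X * sel ((C q.1 ∪ C q.2)ᶜ)) * (X * sel ((C q.1 ∪ C q.2)ᶜ))ᵀ)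
        * (ξ * sel (C q.1 ∪ C q.2)) * (sel (C q.1 ∪ C q.2))ᵀ

/-- The averaging operator `A_X` as a linear endomorphism. -/
def avgL (C : Fin ℓ → Finset (Fin p)) (X : Mat n p) : Mat n p →ₗ[ℝ] Mat n p where
  toFun := avg C X
  map_add' := by
    intro ξ η
    simp [avg, Matrix.add_mul, Matrix.mul_add, Finset.sum_add_distrib, smul_add]
  map_smul' := by
    intro c ξ
    simp only [avg, RingHom.id_apply, Matrix.smul_mul, Matrix.mul_smul, ← Finset.smul_sum]
    rw [smul_comm]

/-- `C(ℓ,2) = ℓ(ℓ-1)/2`. -/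
def choose2 (ℓ : ℕ) : ℝ := (ℓ : ℝ) * ((ℓ : ℝ) - 1) / 2

/-- Block Hadamard product `A ⊡ M` with respect to the partition `C`. -/
def bhad (C : Fin ℓ → Finset (Fin p)) (A : Matrix (Fin ℓ) (Fin ℓ) ℝ)
    (M : Matrix (Fin p) (Fin p) ℝ) : Matrix (Fin p) (Fin p) ℝ :=
  Matrix.of fun s t => (∑ i, ∑ j, if s ∈ C i ∧ t ∈ C j then A i j else 0) * M s t

/-- `Q' = J - ((ℓ-2)/(ℓ-1)) I`. -/
def Qmat (ℓ : ℕ) : Matrix (Fin ℓ) (Fin ℓ) ℝ :=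
  Matrix.of fun i j => 1 - (if i = j then ((ℓ : ℝ) - 2) / ((ℓ : ℝ) - 1) else 0)

/-- The all-ones `ℓ × ℓ` matrix `J`. -/
def Jmat (ℓ : ℕ) : Matrix (Fin ℓ) (Fin ℓ) ℝ := Matrix.of fun _ _ => 1

/-- The operator `B_Z` (the inverse of the averaging operator `A_Z`). -/
def Bop (C : Fin ℓ → Finset (Fin p)) (Z ξ : Mat n p) : Mat n p :=
  Z * (choose2 ℓ • bhad C (Qmat ℓ) (Zᵀ * ξ)) + ((ℓ : ℝ) / 2) • ((1 - Z * Zᵀ) * ξ)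

/-- `‖ξ‖²_{A_Z^{-1}} = ⟨B_Z(ξ), ξ⟩`. -/
def anorm2 (C : Fin ℓ → Finset (Fin p)) (Z ξ : Mat n p) : ℝ := fip (Bop C Z ξ) ξ

/-- The RSSM update `U(X, v, γ, {i,j})`: it agrees with `X` on all columns outside
`C_i ∪ C_j` and performs a retracted partial Riemannian subgradient step there. -/
def update (C : Fin ℓ → Finset (Fin p)) (X v : Mat n p) (γ : ℝ) (i j : Fin ℓ) : Mat n p :=
  X - (X * sel (C i ∪ C j)) * (sel (C i ∪ C j))ᵀ
    + ((X * sel (C i ∪ C j) - γ • pblk X (C i ∪ C j) (v * sel (C i ∪ C j)))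
        * invSqrt ((X * sel (C i ∪ C j) - γ • pblk X (C i ∪ C j) (v * sel (C i ∪ C j)))ᵀ
            * (X * sel (C i ∪ C j) - γ • pblk X (C i ∪ C j) (v * sel (C i ∪ C j)))))
      * (sel (C i ∪ C j))ᵀ

/-- The subdifferential of a `τ`-weakly convex function relative to `Ω`. -/
def subdiff (Ω : Set (Mat n p)) (τ : ℝ) (f : Mat n p → ℝ) (X : Mat n p) :
    Set (Mat n p) :=
  {v | ∀ Y ∈ Ω, f Y ≥ f X + fip v (Y - X) - τ / 2 * (fnorm (Y - X)) ^ 2}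

/-- `C` is a partition of `[p]` into nonempty blocks. -/
def IsPartition (C : Fin ℓ → Finset (Fin p)) : Prop :=
  (∀ i, (C i).Nonempty) ∧ (∀ i j, i ≠ j → Disjoint (C i) (C j)) ∧ (∀ s, ∃ i, s ∈ C i)

/-- The weakly convex Lipschitz setting. -/
structure Setting (n p : ℕ) (f : Mat n p → ℝ) (τ L : ℝ) (Ω : Set (Mat n p)) : Prop where
  tau_nonneg : 0 ≤ τ
  L_pos : 0 < L
  isOpen : IsOpen Ω
  bounded : ∃ R : ℝ, ∀ Y ∈ Ω, fnorm Y ≤ R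
  convex : Convex ℝ Ω
  stiefel_subset : Stiefel n p ⊆ Ω
  lipschitz : ∀ X ∈ Ω, ∀ Y ∈ Ω, |f X - f Y| ≤ L * fnorm (X - Y)
  weaklyConvex : ConvexOn ℝ Ω (fun Z => f Z + τ / 2 * (fnorm Z) ^ 2)

/-- The adaptive proximal objective `Y ↦ f(Y) + (1/(2λ))‖Y-X‖²_{A_X^{-1}}`. -/
def pobj (C : Fin ℓ → Finset (Fin p)) (f : Mat n p → ℝ) (lam : ℝ) (X Y : Mat n p) : ℝ :=
  f Y + 1 / (2 * lam) * anorm2 C X (Y - X)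

/-- The adaptive Moreau envelope `f_λ`. -/
def moreau (C : Fin ℓ → Finset (Fin p)) (f : Mat n p → ℝ) (lam : ℝ) (X : Mat n p) : ℝ :=
  sInf ((fun Y => pobj C f lam X Y) '' Stiefel n p)

open Classical in
/-- The adaptive proximal point `Z_X` (defined via choice; under the standing
hypotheses the minimizer over the Stiefel manifold exists and is unique). -/
def proxPt (C : Fin ℓ → Finset (Fin p)) (f : Mat n p → ℝ) (lam : ℝ) (X : Mat n p) :
    Mat n p :=
  if h : ∃ Z ∈ Stiefel n p, ∀ Y ∈ Stiefel n p, pobj C f lam X Z ≤ pobj C f lam X Y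
  then h.choose else X

/-- The surrogate stationarity measure `Θ_λ(X) = (1/λ)‖Z_X - X‖_{A_X^{-1}}`. -/
def Theta (C : Fin ℓ → Finset (Fin p)) (f : Mat n p → ℝ) (lam : ℝ) (X : Mat n p) : ℝ :=
  1 / lam * Real.sqrt (anorm2 C X (proxPt C f lam X - X))

/-- The type of unordered pairs of distinct indices in `[ℓ]`. -/
def PairT (ℓ : ℕ) := {s : Sym2 (Fin ℓ) // ¬ s.IsDiag}

instance : Fintype (PairT ℓ) := by unfold PairT; infer_instance
instance : DecidableEq (PairT ℓ) := by unfold PairT; infer_instance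
instance : MeasurableSpace (PairT ℓ) := ⊤

/-- The RSSM update as a function of an unordered pair of indices. -/
def updateS (C : Fin ℓ → Finset (Fin p)) (X v : Mat n p) (γ : ℝ) (s : Sym2 (Fin ℓ)) :
    Mat n p :=
  Sym2.lift ⟨fun i j => update C X v γ i j, by
    intro i j
    show update C X v γ i j = update C X v γ j i
    unfold update pblk
    rw [Finset.union_comm (C i) (C j)]⟩ s

/-- The RSSM iterates driven by a sequence `ω` of unordered pairs. -/
def seqIter (C : Fin ℓ → Finset (Fin p)) (V : Mat n p → Mat n p) (X0 : Mat n p)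
    (γ : ℕ → ℝ) (ω : ℕ → PairT ℓ) : ℕ → Mat n p
  | 0 => X0
  | k + 1 => updateS C (seqIter C V X0 γ ω k) (V (seqIter C V X0 γ ω k)) (γ k) (ω k).1

/-- The RSSM iterate after `k` steps driven by a finite prefix of unordered pairs. -/
def preIter (C : Fin ℓ → Finset (Fin p)) (V : Mat n p → Mat n p) (X0 : Mat n p)
    (γ : ℕ → ℝ) : (k : ℕ) → (Fin k → PairT ℓ) → Mat n p
  | 0, _ => X0
  | k + 1, g =>
      updateS C (preIter C V X0 γ k (fun m => g m.castSucc))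
        (V (preIter C V X0 γ k (fun m => g m.castSucc))) (γ k) (g (Fin.last k)).1

/-- `E[h(X^k)]`, the average over all prefixes of unordered pairs of length `k`. -/
def Eavg (C : Fin ℓ → Finset (Fin p)) (V : Mat n p → Mat n p) (X0 : Mat n p)
    (γ : ℕ → ℝ) (k : ℕ) (h : Mat n p → ℝ) : ℝ :=
  (1 / (Fintype.card (PairT ℓ) : ℝ)) ^ k * ∑ g : Fin k → PairT ℓ, h (preIter C V X0 γ k g)

section AuxLemmas

lemma fip_sum (A B : Mat n p) : fip A B = ∑ j, ∑ i, A i j * B i j := by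
  simp [fip, Matrix.trace, Matrix.mul_apply, Matrix.diag, Matrix.transpose_apply]

lemma fip_self_nonneg (A : Mat n p) : 0 ≤ fip A A := by
  rw [fip_sum]
  exact Finset.sum_nonneg fun j _ => Finset.sum_nonneg fun i _ => mul_self_nonneg _

lemma fnorm_sq (A : Mat n p) : fnorm A ^ 2 = fip A A := Real.sq_sqrt (fip_self_nonneg A)

lemma fnorm_nonneg' (A : Mat n p) : 0 ≤ fnorm A := Real.sqrt_nonneg _

lemma fnorm_neg (A : Mat n p) : fnorm (-A) = fnorm A := by
  unfold fnorm fip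
  simp

lemma fip_zero_right (A : Mat n p) : fip A 0 = 0 := by simp [fip]

lemma fip_add_left (A B ξ : Mat n p) : fip (A + B) ξ = fip A ξ + fip B ξ := by
  simp [fip, Matrix.transpose_add, Matrix.add_mul]

lemma fip_sub_left (A B ξ : Mat n p) : fip (A - B) ξ = fip A ξ - fip B ξ := by
  simp [fip, Matrix.transpose_sub, Matrix.sub_mul]

lemma fip_smul_left (r : ℝ) (A ξ : Mat n p) : fip (r • A) ξ = r * fip A ξ := by
  simp [fip, Matrix.transpose_smul, Matrix.smul_mul]

lemma fip_mul_left (X : Mat n p) (A : Matrix (Fin p) (Fin p) ℝ) (ξ : Mat n p) :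
    fip (X * A) ξ = fip A (Xᵀ * ξ) := by
  simp [fip, Matrix.transpose_mul, Matrix.mul_assoc]

lemma anorm2_formula (C : Fin ℓ → Finset (Fin p)) (X : Mat n p) (ξ : Mat n p) :
    anorm2 C X ξ = choose2 ℓ * fip (bhad C (Qmat ℓ) (Xᵀ * ξ)) (Xᵀ * ξ)
      + (ℓ : ℝ) / 2 * (fip ξ ξ - fip (Xᵀ * ξ) (Xᵀ * ξ)) := by
  have hperp : (1 - X * Xᵀ) * ξ = ξ - X * (Xᵀ * ξ) := by
    rw [Matrix.sub_mul, Matrix.one_mul, Matrix.mul_assoc]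
  rw [anorm2, Bop, hperp, fip_add_left, fip_mul_left, fip_smul_left, fip_smul_left,
      fip_sub_left, fip_mul_left]

lemma coeff_eq {C : Fin ℓ → Finset (Fin p)} (hpart : IsPartition C)
    {s t : Fin p} {i0 j0 : Fin ℓ} (hs : s ∈ C i0) (ht : t ∈ C j0) :
    (∑ i, ∑ j, if s ∈ C i ∧ t ∈ C j then Qmat ℓ i j else 0) = Qmat ℓ i0 j0 := by
  rw [Finset.sum_eq_single i0]
  · rw [Finset.sum_eq_single j0]
    · rw [if_pos ⟨hs, ht⟩]
    · intro b _ hb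
      rw [if_neg]
      rintro ⟨_, htb⟩
      exact Finset.disjoint_left.mp (hpart.2.1 b j0 hb) htb ht
    · intro h; exact absurd (Finset.mem_univ j0) h
  · intro b _ hb
    refine Finset.sum_eq_zero fun j _ => ?_
    rw [if_neg]
    rintro ⟨hsb, _⟩
    exact Finset.disjoint_left.mp (hpart.2.1 b i0 hb) hsb hs
  · intro h; exact absurd (Finset.mem_univ i0) h

lemma choose2_Q_ge (hl : 2 ≤ ℓ) (i j : Fin ℓ) : (ℓ : ℝ) / 2 ≤ choose2 ℓ * Qmat ℓ i j := by
  have hℓ : (2 : ℝ) ≤ (ℓ : ℝ) := by exact_mod_cast hl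
  have h1 : (ℓ : ℝ) - 1 ≠ 0 := by linarith
  unfold choose2 Qmat
  simp only [Matrix.of_apply]
  by_cases h : i = j
  · rw [if_pos h]
    have : (ℓ : ℝ) * ((ℓ : ℝ) - 1) / 2 * (1 - ((ℓ : ℝ) - 2) / ((ℓ : ℝ) - 1)) = (ℓ : ℝ) / 2 := by
      field_simp
      ring
    linarith [this.ge]
  · rw [if_neg h]
    nlinarith

lemma bhad_lower {C : Fin ℓ → Finset (Fin p)} (hl : 2 ≤ ℓ) (hpart : IsPartition C)
    (M : Matrix (Fin p) (Fin p) ℝ) :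
    (ℓ : ℝ) / 2 * fip M M ≤ choose2 ℓ * fip (bhad C (Qmat ℓ) M) M := by
  rw [fip_sum, fip_sum, Finset.mul_sum, Finset.mul_sum]
  refine Finset.sum_le_sum fun t _ => ?_
  rw [Finset.mul_sum, Finset.mul_sum]
  refine Finset.sum_le_sum fun s _ => ?_
  obtain ⟨i0, hs⟩ := hpart.2.2 s
  obtain ⟨j0, ht⟩ := hpart.2.2 t
  show (ℓ : ℝ) / 2 * (M s t * M s t) ≤ choose2 ℓ * (bhad C (Qmat ℓ) M s t * M s t)
  have hb : bhad C (Qmat ℓ) M s t = Qmat ℓ i0 j0 * M s t := by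
    unfold bhad
    simp only [Matrix.of_apply]
    rw [coeff_eq hpart hs ht]
  rw [hb]
  have h1 := choose2_Q_ge hl i0 j0
  have h2 : 0 ≤ M s t * M s t := mul_self_nonneg _
  nlinarith [mul_le_mul_of_nonneg_right h1 h2]

end AuxLemmas

/-- basic bounds satisfied by any adaptive proximal minimizer. -/
theorem proximal_minimizer_bounds
    (n p ℓ : ℕ) (hp : 1 ≤ p) (hpn : p ≤ n) (hl : 2 ≤ ℓ)
    (C : Fin ℓ → Finset (Fin p)) (hpart : IsPartition C)
    (f : Mat n p → ℝ) (τ L : ℝ) (Ω : Set (Mat n p)) (hset : Setting n p f τ L Ω)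
    (lam : ℝ) (hlam : 0 < lam)
    (X : Mat n p) (hX : X ∈ Stiefel n p)
    (Z : Mat n p) (hZ : Z ∈ Stiefel n p)
    (hmin : ∀ Y ∈ Stiefel n p, pobj C f lam X Z ≤ pobj C f lam X Y) :
    fnorm (Z - X) ≤ 4 * lam * L / (ℓ : ℝ) ∧
    (ℓ : ℝ) / (4 * lam) * (fnorm (Z - X)) ^ 2 ≤ 1 / (2 * lam) * anorm2 C X (Z - X) ∧
    1 / (2 * lam) * anorm2 C X (Z - X) ≤ f X - f Z ∧
    f X - f Z ≤ L * fnorm (Z - X) := by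
  have hXΩ : X ∈ Ω := hset.stiefel_subset hX
  have hZΩ : Z ∈ Ω := hset.stiefel_subset hZ
  have hℓ2 : (2 : ℝ) ≤ (ℓ : ℝ) := by exact_mod_cast hl
  set ξ := Z - X with hξ
  -- third inequality
  have h3 : 1 / (2 * lam) * anorm2 C X ξ ≤ f X - f Z := by
    have hm := hmin X hX
    simp only [pobj] at hm
    have hz : anorm2 C X (X - X) = 0 := by
      rw [sub_self]
      exact fip_zero_right _
    rw [hz] at hm
    linarith
  -- fourth inequality
  have h4 : f X - f Z ≤ L * fnorm ξ := by
    have hlip := hset.lipschitz X hXΩ Z hZΩ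
    have heq : fnorm (X - Z) = fnorm ξ := by
      rw [← fnorm_neg (X - Z), neg_sub]
    calc f X - f Z ≤ |f X - f Z| := le_abs_self _
      _ ≤ L * fnorm (X - Z) := hlip
      _ = L * fnorm ξ := by rw [heq]
  -- lower bound on anorm2
  have hlow : (ℓ : ℝ) / 2 * fip ξ ξ ≤ anorm2 C X ξ := by
    rw [anorm2_formula C X ξ]
    have := bhad_lower hl hpart (Xᵀ * ξ)
    linarith
  -- second inequality
  have h2 : (ℓ : ℝ) / (4 * lam) * fnorm ξ ^ 2 ≤ 1 / (2 * lam) * anorm2 C X ξ := by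
    rw [fnorm_sq]
    have hpos : (0 : ℝ) ≤ 1 / (2 * lam) := by positivity
    have h := mul_le_mul_of_nonneg_left hlow hpos
    have hln : lam ≠ 0 := ne_of_gt hlam
    have heq : (ℓ : ℝ) / (4 * lam) * fip ξ ξ = 1 / (2 * lam) * ((ℓ : ℝ) / 2 * fip ξ ξ) := by
      field_simp
      ring
    rw [heq]
    exact h
  -- first inequality
  have hr0 : 0 ≤ fnorm ξ := fnorm_nonneg' ξ
  have hchain : (ℓ : ℝ) / (4 * lam) * fnorm ξ ^ 2 ≤ L * fnorm ξ :=
    le_trans h2 (le_trans h3 h4)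
  have h1 : fnorm ξ ≤ 4 * lam * L / (ℓ : ℝ) := by
    rcases eq_or_lt_of_le hr0 with h0 | h0
    · rw [← h0]
      have hℓp : (0 : ℝ) < (ℓ : ℝ) := by linarith
      have hL := hset.L_pos
      positivity
    · have hℓpos : (0 : ℝ) < (ℓ : ℝ) := by linarith
      rw [le_div_iff₀ hℓpos]
      have hkey : (ℓ : ℝ) * fnorm ξ ^ 2 ≤ 4 * lam * (L * fnorm ξ) := by
        have hm := mul_le_mul_of_nonneg_left hchain (by positivity : (0 : ℝ) ≤ 4 * lam)
        calc (ℓ : ℝ) * fnorm ξ ^ 2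
            = 4 * lam * ((ℓ : ℝ) / (4 * lam) * fnorm ξ ^ 2) := by
              field_simp
            _ ≤ 4 * lam * (L * fnorm ξ) := hm
      nlinarith [hkey, h0]
  exact ⟨h1, h2, h3, h4⟩

end RSSM
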